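/- (Lemma A.2: bound on the return in the f-interpolant MDP, matrix form.) Let X be a finite nonempty type, γ ∈ [0,1), and let P₁, P₂, P : X → X → ℝ be row-stochastic matrices, r₁, r₂, r : X → ℝ rewards with |r(x)| ≤ R_max for all x (R_max ≥ 0), f ∈ [0,1], and μ : X → ℝ a probability mass function. Define the f-interpolant P_f := f·P₁ + (1−f)·P₂ and r_f := f·r₁ + (1−f)·r₂; define the returns J(P', r') := Σ_x μ(x)·(S_{P'}·r')(x); let w(x) := (1−γ)·Σ_y μ(y)·S_{P_f}(y,x) be the discounted occupancy of the interpolant dynamics; let Q := S_P·r; and let D := (1/2)·max_x Σ_y |P₂(x,y) − P(x,y)|. Then |J(P_f, r_f) − J(P, r)| ≤ α, where α = 2·γ·(1−f)·R_max·D/(1−γ)² + (γ·f/(1−γ))·|Σ_x w(x)·Σ_y (P₁(x,y) − P(x,y))·Q(y)| + (f/(1−γ))·Σ_x w(x)·|r₁(x) − r(x)| + ((1−f)/(1−γ))·Σ_x w(x)·|r₂(x) − r(x)|. -/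

import Mathlib

/-!
With `Q = S_P r` the value of the reference chain, the simulation lemma gives
`J(P_f, r_f) - J(P, r) = (1 - γ)⁻¹ ∑ₓ w(x) ((r_f - r)(x) + γ ((P_f - P) Q)(x))`.
Since `S_{P_f}` is entrywise nonnegative with row sums `(1 - γ)⁻¹` (a minimum principle for
`1 - γ P_f`), the occupancy `w` is a probability vector. Splitting `P_f - P` and `r_f - r` along
the interpolation and bounding the `P₂` term by `‖Q‖∞ ≤ R_max / (1 - γ)` gives the four terms.
-/

open Matrix Finset

section DotProduct
variable {m n : Type*} [Fintype n]

lemma abs_mulVec_apply_le (A : Matrix m n ℝ) (v : n → ℝ) (i : m) :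
    |(A *ᵥ v) i| ≤ (∑ j, |A i j|) * ‖v‖ :=
  calc |(A *ᵥ v) i| ≤ ∑ j, |A i j| * |v j| := by
        simpa only [mulVec, dotProduct, abs_mul] using
          abs_sum_le_sum_abs (fun j => A i j * v j) univ
    _ ≤ ∑ j, |A i j| * ‖v‖ := by gcongr with j; exact norm_le_pi_norm v j
    _ = (∑ j, |A i j|) * ‖v‖ := (sum_mul ..).symm

lemma abs_dotProduct_le_of_nonneg {w : n → ℝ} (hw : ∀ x, 0 ≤ w x) (v : n → ℝ) :
    |w ⬝ᵥ v| ≤ ∑ x, w x * |v x| := by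
  simpa only [dotProduct, abs_mul, abs_of_nonneg (hw _)] using
    abs_sum_le_sum_abs (fun x => w x * v x) univ

lemma abs_dotProduct_le_of_forall_abs_le {w : n → ℝ} (hw0 : ∀ x, 0 ≤ w x)
    (hw1 : ∑ x, w x = 1) {v : n → ℝ} {K : ℝ} (hv : ∀ x, |v x| ≤ K) : |w ⬝ᵥ v| ≤ K :=
  calc |w ⬝ᵥ v| ≤ ∑ x, w x * |v x| := abs_dotProduct_le_of_nonneg hw0 v
    _ ≤ ∑ x, w x * K := by gcongr with x; exacts [hw0 x, hv x]
    _ = K := by rw [← sum_mul, hw1, one_mul]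

lemma abs_dotProduct_mulVec_le [Fintype m] {w : m → ℝ} (hw0 : ∀ x, 0 ≤ w x) (hw1 : ∑ x, w x = 1)
    {M : Matrix m n ℝ} {v : n → ℝ} {K L : ℝ} (hM : ∀ x, ∑ y, |M x y| ≤ K) (hv : ‖v‖ ≤ L) :
    |w ⬝ᵥ (M *ᵥ v)| ≤ K * L :=
  abs_dotProduct_le_of_forall_abs_le hw0 hw1 fun x => (abs_mulVec_apply_le M v x).trans <|
    mul_le_mul (hM x) hv (norm_nonneg v) ((sum_nonneg fun _ _ => abs_nonneg _).trans (hM x))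

end DotProduct

section Resolvent
variable {X : Type*} [Fintype X] [DecidableEq X] {A : Matrix X X ℝ} {γ : ℝ}

lemma norm_mulVec_le_of_mem_rowStochastic (hA : A ∈ rowStochastic ℝ X) (v : X → ℝ) :
    ‖A *ᵥ v‖ ≤ ‖v‖ := by
  refine (pi_norm_le_iff_of_nonneg (norm_nonneg v)).2 fun x => ?_
  simpa only [Real.norm_eq_abs, abs_of_nonneg (hA.1 x _), sum_row_of_mem_rowStochastic hA,
    one_mul] using abs_mulVec_apply_le A v x

lemma one_sub_smul_mulVec_eq (v : X → ℝ) : (1 - γ • A) *ᵥ v = v - γ • (A *ᵥ v) := by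
  rw [sub_mulVec, one_mulVec, smul_mulVec]

lemma one_sub_mul_norm_le_norm_one_sub_smul_mulVec (hA : A ∈ rowStochastic ℝ X) (hγ0 : 0 ≤ γ)
    (v : X → ℝ) : (1 - γ) * ‖v‖ ≤ ‖(1 - γ • A) *ᵥ v‖ := by
  have h := norm_sub_norm_le v (γ • (A *ᵥ v))
  rw [norm_smul, Real.norm_of_nonneg hγ0] at h
  rw [one_sub_smul_mulVec_eq]
  nlinarith [norm_mulVec_le_of_mem_rowStochastic hA v]

lemma isUnit_det_one_sub_smul (hA : A ∈ rowStochastic ℝ X) (hγ0 : 0 ≤ γ) (hγ1 : γ < 1) :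
    IsUnit (1 - γ • A).det := by
  refine (isUnit_iff_isUnit_det _).1 (mulVec_injective_iff_isUnit.1 fun u v huv => ?_)
  have h := one_sub_mul_norm_le_norm_one_sub_smul_mulVec hA hγ0 (u - v)
  rw [mulVec_sub, huv, sub_self, norm_zero] at h
  have : ‖u - v‖ = 0 := le_antisymm (by nlinarith) (norm_nonneg _)
  exact sub_eq_zero.1 (norm_eq_zero.1 this)

lemma nonneg_of_one_sub_smul_mulVec_nonneg (hA : A ∈ rowStochastic ℝ X) (hγ0 : 0 ≤ γ)
    (hγ1 : γ < 1) {v : X → ℝ} (hv : ∀ x, 0 ≤ ((1 - γ • A) *ᵥ v) x) (x : X) : 0 ≤ v x := by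
  obtain ⟨x₀, -, hx₀⟩ := exists_min_image univ v ⟨x, mem_univ x⟩
  -- minimum principle: at a minimiser of `v`, averaging by `A` cannot decrease `v`
  have hmean : 0 ≤ (A *ᵥ (v - v x₀ • 1)) x₀ :=
    nonneg_mulVec_of_mem_rowStochastic hA (fun y => by simpa using hx₀ y (mem_univ y)) x₀
  rw [mulVec_sub, mulVec_smul, one_vecMul_of_mem_rowStochastic hA] at hmean
  have hx₀v := hv x₀
  simp only [one_sub_smul_mulVec_eq, Pi.sub_apply, Pi.smul_apply, smul_eq_mul, mul_one,
    Pi.one_apply] at hmean hx₀v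
  have : 0 ≤ v x₀ := by nlinarith
  exact this.trans (hx₀ x (mem_univ x))

lemma one_sub_smul_inv_nonneg (hA : A ∈ rowStochastic ℝ X) (hγ0 : 0 ≤ γ) (hγ1 : γ < 1)
    (x y : X) : 0 ≤ (1 - γ • A)⁻¹ x y := by
  have h := nonneg_of_one_sub_smul_mulVec_nonneg hA hγ0 hγ1
    (v := (1 - γ • A)⁻¹ *ᵥ Pi.single y 1) ?_ x
  · simpa [mulVec_single_one] using h
  · rw [mulVec_mulVec, mul_nonsing_inv _ (isUnit_det_one_sub_smul hA hγ0 hγ1), one_mulVec]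
    exact (Pi.single_nonneg.2 zero_le_one : (0 : X → ℝ) ≤ Pi.single y 1)

lemma one_sub_smul_inv_mulVec_one (hA : A ∈ rowStochastic ℝ X) (hγ0 : 0 ≤ γ) (hγ1 : γ < 1) :
    (1 - γ • A)⁻¹ *ᵥ 1 = (1 - γ)⁻¹ • 1 := by
  have h : (1 - γ • A) *ᵥ 1 = (1 - γ) • 1 := by
    rw [one_sub_smul_mulVec_eq, one_vecMul_of_mem_rowStochastic hA, sub_smul, one_smul]
  calc (1 - γ • A)⁻¹ *ᵥ 1 = (1 - γ • A)⁻¹ *ᵥ ((1 - γ)⁻¹ • (1 - γ • A) *ᵥ 1) := by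
        rw [h, inv_smul_smul₀ (sub_ne_zero.2 hγ1.ne')]
    _ = (1 - γ)⁻¹ • 1 := by
        rw [mulVec_smul, mulVec_mulVec, nonsing_inv_mul _ (isUnit_det_one_sub_smul hA hγ0 hγ1),
          one_mulVec]

lemma norm_one_sub_smul_inv_mulVec_le (hA : A ∈ rowStochastic ℝ X) (hγ0 : 0 ≤ γ) (hγ1 : γ < 1)
    (r : X → ℝ) : ‖(1 - γ • A)⁻¹ *ᵥ r‖ ≤ ‖r‖ / (1 - γ) := by
  rw [le_div_iff₀ (sub_pos.2 hγ1), mul_comm]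
  have h := one_sub_mul_norm_le_norm_one_sub_smul_mulVec hA hγ0 ((1 - γ • A)⁻¹ *ᵥ r)
  rwa [mulVec_mulVec, mul_nonsing_inv _ (isUnit_det_one_sub_smul hA hγ0 hγ1), one_mulVec] at h

end Resolvent

section Occupancy
variable {X : Type*} [Fintype X] [DecidableEq X] {A B : Matrix X X ℝ} {γ : ℝ}

noncomputable def discountedOccupancy (γ : ℝ) (A : Matrix X X ℝ) (μ : X → ℝ) : X → ℝ :=
  (1 - γ) • (μ ᵥ* (1 - γ • A)⁻¹)

lemma discountedOccupancy_nonneg (hA : A ∈ rowStochastic ℝ X) (hγ0 : 0 ≤ γ) (hγ1 : γ < 1)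
    {μ : X → ℝ} (hμ : ∀ x, 0 ≤ μ x) (x : X) : 0 ≤ discountedOccupancy γ A μ x :=
  mul_nonneg (sub_nonneg.2 hγ1.le)
    (sum_nonneg fun y _ => mul_nonneg (hμ y) (one_sub_smul_inv_nonneg hA hγ0 hγ1 y x))

lemma sum_discountedOccupancy (hA : A ∈ rowStochastic ℝ X) (hγ0 : 0 ≤ γ) (hγ1 : γ < 1)
    {μ : X → ℝ} (hμ : ∑ x, μ x = 1) : ∑ x, discountedOccupancy γ A μ x = 1 := by
  rw [← dotProduct_one, discountedOccupancy, smul_dotProduct, ← dotProduct_mulVec,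
    one_sub_smul_inv_mulVec_one hA hγ0 hγ1, dotProduct_smul, dotProduct_one, hμ, smul_eq_mul,
    smul_eq_mul, mul_one, mul_inv_cancel₀ (sub_ne_zero.2 hγ1.ne')]

-- The simulation lemma.
lemma one_sub_smul_inv_mulVec_sub (hA : IsUnit (1 - γ • A).det) (hB : IsUnit (1 - γ • B).det)
    (r' r : X → ℝ) :
    (1 - γ • A)⁻¹ *ᵥ r' - (1 - γ • B)⁻¹ *ᵥ r =
      (1 - γ • A)⁻¹ *ᵥ (r' - r + γ • ((A - B) *ᵥ ((1 - γ • B)⁻¹ *ᵥ r))) := by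
  set Q := (1 - γ • B)⁻¹ *ᵥ r
  have hr : r = (1 - γ • B) *ᵥ Q := by rw [mulVec_mulVec, mul_nonsing_inv _ hB, one_mulVec]
  have h : r' - r + γ • ((A - B) *ᵥ Q) = r' - (1 - γ • A) *ᵥ Q := by
    rw [hr, one_sub_smul_mulVec_eq, one_sub_smul_mulVec_eq, sub_mulVec, smul_sub]
    abel
  rw [h, mulVec_sub, mulVec_mulVec, nonsing_inv_mul _ hA, one_mulVec]

lemma dotProduct_one_sub_smul_inv_mulVec_sub (hγ1 : γ ≠ 1) (hA : IsUnit (1 - γ • A).det)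
    (hB : IsUnit (1 - γ • B).det) (μ r' r : X → ℝ) :
    μ ⬝ᵥ ((1 - γ • A)⁻¹ *ᵥ r') - μ ⬝ᵥ ((1 - γ • B)⁻¹ *ᵥ r) =
      (1 - γ)⁻¹ * (discountedOccupancy γ A μ ⬝ᵥ
        (r' - r + γ • ((A - B) *ᵥ ((1 - γ • B)⁻¹ *ᵥ r)))) := by
  rw [← dotProduct_sub, one_sub_smul_inv_mulVec_sub hA hB, dotProduct_mulVec, discountedOccupancy,
    smul_dotProduct, smul_eq_mul, inv_mul_cancel_left₀ (sub_ne_zero.2 hγ1.symm)]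

lemma dotProduct_interpolant_sub {f : ℝ} {P₁ P₂ P : Matrix X X ℝ} (hγ1 : γ ≠ 1)
    (hPf : IsUnit (1 - γ • (f • P₁ + (1 - f) • P₂)).det) (hP : IsUnit (1 - γ • P).det)
    (μ r₁ r₂ r : X → ℝ) :
    μ ⬝ᵥ ((1 - γ • (f • P₁ + (1 - f) • P₂))⁻¹ *ᵥ (f • r₁ + (1 - f) • r₂)) -
        μ ⬝ᵥ ((1 - γ • P)⁻¹ *ᵥ r) =
      (1 - γ)⁻¹ * (f * (discountedOccupancy γ (f • P₁ + (1 - f) • P₂) μ ⬝ᵥ (r₁ - r)) +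
        (1 - f) * (discountedOccupancy γ (f • P₁ + (1 - f) • P₂) μ ⬝ᵥ (r₂ - r)) +
        γ * f * (discountedOccupancy γ (f • P₁ + (1 - f) • P₂) μ ⬝ᵥ
          ((P₁ - P) *ᵥ ((1 - γ • P)⁻¹ *ᵥ r))) +
        γ * (1 - f) * (discountedOccupancy γ (f • P₁ + (1 - f) • P₂) μ ⬝ᵥ
          ((P₂ - P) *ᵥ ((1 - γ • P)⁻¹ *ᵥ r)))) := by
  have hr : f • r₁ + (1 - f) • r₂ - r = f • (r₁ - r) + (1 - f) • (r₂ - r) := by module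
  have hP' : f • P₁ + (1 - f) • P₂ - P = f • (P₁ - P) + (1 - f) • (P₂ - P) := by module
  rw [dotProduct_one_sub_smul_inv_mulVec_sub hγ1 hPf hP, hr, hP']
  simp only [add_mulVec, smul_mulVec, dotProduct_add, dotProduct_smul, smul_eq_mul]
  ring

end Occupancy

lemma abs_interpolant_le {f γ a b c e A B E : ℝ} (hf0 : 0 ≤ f) (hf1 : f ≤ 1) (hγ : 0 ≤ γ)
    (ha : |a| ≤ A) (hb : |b| ≤ B) (he : |e| ≤ E) :
    |f * a + (1 - f) * b + γ * f * c + γ * (1 - f) * e| ≤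
      f * A + (1 - f) * B + γ * f * |c| + γ * (1 - f) * E := by
  have h1f : 0 ≤ 1 - f := sub_nonneg.2 hf1
  refine (abs_add_le _ _).trans (add_le_add ((abs_add_le _ _).trans (add_le_add
    ((abs_add_le _ _).trans (add_le_add ?_ ?_)) ?_)) ?_) <;>
  simp only [abs_mul, abs_of_nonneg hf0, abs_of_nonneg h1f, abs_of_nonneg hγ] <;> gcongr

theorem f_interpolant_return_bound {X : Type*}
    [Fintype X] [Nonempty X] [DecidableEq X]
    (γ : ℝ) (hγ0 : 0 ≤ γ) (hγ1 : γ < 1)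
    (P₁ P₂ P : Matrix X X ℝ)
    (hP₁0 : ∀ x y, 0 ≤ P₁ x y) (hP₁1 : ∀ x, ∑ y, P₁ x y = 1)
    (hP₂0 : ∀ x y, 0 ≤ P₂ x y) (hP₂1 : ∀ x, ∑ y, P₂ x y = 1)
    (hP0 : ∀ x y, 0 ≤ P x y) (hP1 : ∀ x, ∑ y, P x y = 1)
    (r₁ r₂ r : X → ℝ) (Rmax : ℝ) (hR : 0 ≤ Rmax) (hr : ∀ x, |r x| ≤ Rmax)
    (f : ℝ) (hf0 : 0 ≤ f) (hf1 : f ≤ 1)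
    (μ : X → ℝ) (hμ0 : ∀ x, 0 ≤ μ x) (hμ1 : ∑ x, μ x = 1)
    (Pf : Matrix X X ℝ) (hPf : Pf = f • P₁ + (1 - f) • P₂)
    (rf : X → ℝ) (hrf : ∀ x, rf x = f * r₁ x + (1 - f) * r₂ x)
    (w : X → ℝ) (hw : ∀ x, w x = (1 - γ) * ∑ y, μ y * (1 - γ • Pf)⁻¹ y x)
    (Q : X → ℝ) (hQ : Q = (1 - γ • P)⁻¹ *ᵥ r)
    (D : ℝ) (hD : D = (1 / 2) * Finset.univ.sup' Finset.univ_nonempty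
      fun x => ∑ y, |P₂ x y - P x y|) :
    |(∑ x, μ x * ((1 - γ • Pf)⁻¹ *ᵥ rf) x) - ∑ x, μ x * ((1 - γ • P)⁻¹ *ᵥ r) x| ≤
      2 * γ * (1 - f) * Rmax * D / (1 - γ) ^ 2 +
        (γ * f / (1 - γ)) * |∑ x, w x * ∑ y, (P₁ x y - P x y) * Q y| +
        (f / (1 - γ)) * (∑ x, w x * |r₁ x - r x|) +
        ((1 - f) / (1 - γ)) * ∑ x, w x * |r₂ x - r x| := by
  have h1γ : 0 < 1 - γ := sub_pos.2 hγ1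
  have hP : P ∈ rowStochastic ℝ X := mem_rowStochastic_iff_sum.2 ⟨hP0, hP1⟩
  have hPf' : Pf ∈ rowStochastic ℝ X := hPf ▸ convex_rowStochastic
    (mem_rowStochastic_iff_sum.2 ⟨hP₁0, hP₁1⟩) (mem_rowStochastic_iff_sum.2 ⟨hP₂0, hP₂1⟩)
    hf0 (sub_nonneg.2 hf1) (add_sub_cancel f 1)
  obtain rfl : w = discountedOccupancy γ Pf μ := funext hw
  obtain rfl : rf = f • r₁ + (1 - f) • r₂ := funext hrf
  have hw0 := discountedOccupancy_nonneg hPf' hγ0 hγ1 hμ0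
  have hw1 := sum_discountedOccupancy hPf' hγ0 hγ1 hμ1
  have hQ_le : ‖Q‖ ≤ Rmax / (1 - γ) := hQ ▸ (norm_one_sub_smul_inv_mulVec_le hP hγ0 hγ1 r).trans
    (div_le_div_of_nonneg_right ((pi_norm_le_iff_of_nonneg hR).2 hr) h1γ.le)
  have hrow : ∀ x, ∑ y, |(P₂ - P) x y| ≤ 2 * D := fun x => by
    rw [hD, one_div, ← mul_assoc, mul_inv_cancel₀ two_ne_zero, one_mul]
    exact le_sup' (fun x => ∑ y, |P₂ x y - P x y|) (mem_univ x)
  have hdiff := dotProduct_interpolant_sub hγ1.ne (hPf ▸ isUnit_det_one_sub_smul hPf' hγ0 hγ1)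
    (isUnit_det_one_sub_smul hP hγ0 hγ1) μ r₁ r₂ r
  rw [← hPf, ← hQ] at hdiff
  change |μ ⬝ᵥ _ - μ ⬝ᵥ _| ≤ _ + _ * |_ ⬝ᵥ ((P₁ - P) *ᵥ Q)| + _ * ∑ x, _ * |(r₁ - r) x| +
    _ * ∑ x, _ * |(r₂ - r) x|
  rw [← hQ, hdiff, abs_mul, abs_inv, abs_of_pos h1γ]
  refine (mul_le_mul_of_nonneg_left (abs_interpolant_le hf0 hf1 hγ0
    (abs_dotProduct_le_of_nonneg hw0 _) (abs_dotProduct_le_of_nonneg hw0 _)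
    (abs_dotProduct_mulVec_le hw0 hw1 hrow hQ_le))
    (inv_nonneg.2 h1γ.le)).trans_eq ?_
  field_simp
  ring
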